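/- Let A be a Q(q)-algebra, x, y ∈ A satisfying x² y − [2]_q x y x + y x² = 0. Then for every m ≥ 2 and e ∈ {±1}: ∑_{r+s=m} (−1)^r q^{e r (2−m)} x^{(r)} y x^{(s)} = 0, where x^{(k)} = x^k/[k]_q!. -/

import Mathlib

noncomputable section

abbrev K : Type := RatFunc ℚ

/-- The indeterminate `q` in `ℚ(q)`. -/
def qq : K := RatFunc.X

/-- Balanced quantum integer at base `x`. -/
def qintx (x : K) (m : ℤ) : K := (x ^ m - x ^ (-m)) / (x - x⁻¹)

/-- Balanced quantum integer `[m]_q`. -/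
def qint (m : ℤ) : K := qintx qq m

/-- Quantum factorial at base `x`. -/
def qfactx (x : K) (m : ℕ) : K := ∏ j ∈ Finset.range m, qintx x ((j : ℤ) + 1)

/-- Quantum factorial `[m]_q!`. -/
def qfact (m : ℕ) : K := qfactx qq m

/-- Gaussian binomial coefficient at base `x` (zero when `r > m`). -/
def qbinomx (x : K) (m r : ℕ) : K :=
  if r ≤ m then qfactx x m / (qfactx x r * qfactx x (m - r)) else 0

/-- Gaussian binomial coefficient. -/
def qbinom (m r : ℕ) : K := qbinomx qq m r

/-- The ı-divided powers `B^{(m)}_{p̄}` of `B` with central parameter `Z`,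
given by the closed product formulas of the paper. -/
def iDP {A : Type*} [Ring A] [Algebra K A] (B Z : A) (p : ZMod 2) (m : ℕ) : A :=
  (qfact m)⁻¹ •
    ((if m % 2 = 1 then B else 1) *
      ((List.range (m / 2)).map (fun j =>
        B ^ 2 -
          ((qint (if p = 1 then 2 * (j : ℤ) + 1
                  else if m % 2 = 1 then 2 * (j : ℤ) + 2 else 2 * (j : ℤ))) ^ 2 * qq) • Z)).prod)

/-- The usual divided power `x^{(k)} = x^k/[k]_q!`. -/
def dp {A : Type*} [Ring A] [Algebra K A] (x : A) (k : ℕ) : A := (qfact k)⁻¹ • x ^ k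

/-!
Write `f_m` for the alternating sum, with `t = q ^ e`. Since `x * x^{(k)} = [k+1] x^{(k+1)}`,
both `x * f_m` and `f_m * x` are combinations of the terms `x^{(r)} y x^{(m+1-r)}` of `f_{m+1}`,
and an identity between balanced quantum integers (valid at `t = q` and, by the symmetry
`[n]_{q⁻¹} = [n]_q`, at `t = q⁻¹`) gives
`x f_m - t^{2m-1} f_m x = -t^{2m-1} [m+1] f_{m+1}`.
Hence `f_m = 0` forces `f_{m+1} = 0`, and `f_2` is `[2]⁻¹` times the quantum Serre relation.
-/

open Finset

lemma qintx_inv (x : K) (m : ℤ) : qintx x⁻¹ m = qintx x m := by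
  rw [qintx, qintx, inv_inv, inv_zpow', inv_zpow', neg_neg, ← neg_sub x, ← neg_sub (x ^ m),
    neg_div_neg_eq]

lemma qint_zero : qint 0 = 0 := by simp [qint, qintx]

lemma qq_zpow_sub_zpow_neg_ne_zero {n : ℕ} (hn : n ≠ 0) :
    qq ^ (n : ℤ) - qq ^ (-(n : ℤ)) ≠ 0 := by
  intro h
  have h2n : qq ^ (2 * n) = 1 := by
    rw [sub_eq_zero] at h
    rw [← zpow_natCast, Nat.cast_mul, Nat.cast_two, two_mul, zpow_add₀ RatFunc.X_ne_zero]
    nth_rewrite 1 [h]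
    rw [← zpow_add₀ RatFunc.X_ne_zero, neg_add_cancel, zpow_zero]
  have hX : (Polynomial.X : Polynomial ℚ) ^ (2 * n) = 1 :=
    RatFunc.algebraMap_injective ℚ (by simpa [qq, RatFunc.algebraMap_X] using h2n)
  simpa [hn] using congrArg Polynomial.natDegree hX

lemma qint_natCast_ne_zero {n : ℕ} (hn : n ≠ 0) : qint n ≠ 0 :=
  div_ne_zero (qq_zpow_sub_zpow_neg_ne_zero hn)
    (by simpa using qq_zpow_sub_zpow_neg_ne_zero one_ne_zero)

lemma qint_one : qint 1 = 1 := by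
  simpa [qint, qintx] using div_self (by simpa using qq_zpow_sub_zpow_neg_ne_zero one_ne_zero)

lemma qfact_succ (k : ℕ) : qfact (k + 1) = qfact k * qint (k + 1) :=
  prod_range_succ _ _

lemma qintx_exchange {t : K} (ht : t ≠ 0) (R M : ℤ) :
    t ^ (2 * M - 1) *
        (t ^ (R * (2 - M)) * qintx t (M + 1 - R) - qintx t (M + 1) * t ^ (R * (1 - M)))
      = -(t ^ ((R - 1) * (2 - M)) * qintx t R) := by
  have hnum : t ^ (2 * M - 1) * (t ^ (R * (2 - M)) * (t ^ (M + 1 - R) - t ^ (-(M + 1 - R)))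
        - (t ^ (M + 1) - t ^ (-(M + 1))) * t ^ (R * (1 - M)))
      = -(t ^ ((R - 1) * (2 - M)) * (t ^ R - t ^ (-R))) := by
    simp only [mul_sub, sub_mul, neg_sub, ← zpow_add₀ ht]
    ring_nf
  simp only [qintx, div_eq_mul_inv]
  linear_combination (t - t⁻¹)⁻¹ * hnum

lemma qintx_eq_qint_of_eq_qq_or_inv {t : K} (ht : t = qq ∨ t = qq⁻¹) (n : ℤ) :
    qintx t n = qint n := by
  rcases ht with rfl | rfl
  exacts [rfl, qintx_inv qq n]

lemma ne_zero_of_eq_qq_or_inv {t : K} (ht : t = qq ∨ t = qq⁻¹) : t ≠ 0 := by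
  rcases ht with rfl | rfl <;> simp [qq, RatFunc.X_ne_zero]

section SerreElement

variable {A : Type*} [Ring A] [Algebra K A] (x y : A)

lemma dp_zero : dp x 0 = 1 := by simp [dp, qfact, qfactx]

lemma dp_one : dp x 1 = x := by
  simp [dp, qfact, qfactx, ← qint.eq_def, qint_one]

lemma dp_two : dp x 2 = (qint 2)⁻¹ • x ^ 2 := by
  simp [dp, qfact, qfactx, prod_range_succ, ← qint.eq_def, qint_one]

lemma qint_smul_dp_succ (k : ℕ) : qint (k + 1) • dp x (k + 1) = dp x k * x := by
  rw [dp, dp, qfact_succ, smul_smul, mul_inv, mul_left_comm,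
    mul_inv_cancel₀ (by exact_mod_cast qint_natCast_ne_zero k.succ_ne_zero), mul_one,
    smul_mul_assoc, pow_succ]

lemma mul_dp (k : ℕ) : x * dp x k = dp x k * x := by
  rw [dp, mul_smul_comm, smul_mul_assoc, (Commute.self_pow x k).eq]

-- At `r = 0` the truncated `r - 1` is harmless because `qint 0 = 0`.
lemma mul_sum_smul_dp_mul_dp (c : ℕ → K) (m : ℕ) :
    x * ∑ r ∈ range (m + 1), c r • (dp x r * y * dp x (m - r))
      = ∑ r ∈ range (m + 2), (qint r * c (r - 1)) • (dp x r * y * dp x (m + 1 - r)) := by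
  rw [sum_range_succ' _ (m + 1), mul_sum]
  simp only [Nat.cast_zero, qint_zero, zero_mul, zero_smul, add_zero]
  refine sum_congr rfl fun r _ => ?_
  rw [mul_smul_comm, ← mul_assoc, ← mul_assoc, mul_dp, ← qint_smul_dp_succ]
  simp [smul_smul, mul_comm]

lemma sum_smul_dp_mul_dp_mul (c : ℕ → K) (m : ℕ) :
    (∑ r ∈ range (m + 1), c r • (dp x r * y * dp x (m - r))) * x
      = ∑ r ∈ range (m + 2),
          (c r * qint ((m : ℤ) + 1 - r)) • (dp x r * y * dp x (m + 1 - r)) := by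
  rw [sum_range_succ _ (m + 1), sum_mul]
  simp only [Nat.cast_add, Nat.cast_one, sub_self, qint_zero, mul_zero, zero_smul, add_zero]
  refine sum_congr rfl fun r hr => ?_
  have hrm : r ≤ m := Nat.lt_succ_iff.1 (mem_range.1 hr)
  rw [smul_mul_assoc, mul_assoc, ← qint_smul_dp_succ, mul_smul_comm, smul_smul,
    Nat.sub_add_comm hrm, Nat.cast_sub hrm, sub_add_eq_add_sub]

-- With `t = q ^ e` this is the paper's `f^-_{i,j;1,m,e}` evaluated at `(x, y)`.
def higherSerre (t : K) (m : ℕ) : A :=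
  ∑ r ∈ range (m + 1), ((-1 : K) ^ r * t ^ ((r : ℤ) * (2 - m))) • (dp x r * y * dp x (m - r))

lemma higherSerre_two (t : K) :
    higherSerre x y t 2 = (qint 2)⁻¹ • (x ^ 2 * y - qint 2 • (x * y * x) + y * x ^ 2) := by
  have h2 : qint 2 ≠ 0 := by exact_mod_cast qint_natCast_ne_zero two_ne_zero
  rw [smul_add, smul_sub, smul_smul, inv_mul_cancel₀ h2, one_smul]
  norm_num [higherSerre, sum_range_succ, dp_zero, dp_one, dp_two]
  abel

lemma mul_higherSerre {t : K} (ht : t = qq ∨ t = qq⁻¹) (m : ℕ) :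
    x * higherSerre x y t m = t ^ (2 * (m : ℤ) - 1) • (higherSerre x y t m * x)
      - (t ^ (2 * (m : ℤ) - 1) * qint (m + 1)) • higherSerre x y t (m + 1) := by
  rw [higherSerre, mul_sum_smul_dp_mul_dp, sum_smul_dp_mul_dp_mul, higherSerre, smul_sum,
    smul_sum, ← sum_sub_distrib]
  refine sum_congr rfl fun r _ => ?_
  rw [smul_smul, smul_smul, ← sub_smul]
  congr 1
  rcases r with _ | s
  · simp [qint_zero]
  · have h := qintx_exchange (ne_zero_of_eq_qq_or_inv ht) ((s : ℤ) + 1) m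
    simp only [qintx_eq_qint_of_eq_qq_or_inv ht, add_sub_cancel_right] at h
    push_cast
    rw [show 2 - ((m : ℤ) + 1) = 1 - m by ring]
    linear_combination (-1 : K) ^ s * h

lemma higherSerre_succ_eq_zero {t : K} (ht : t = qq ∨ t = qq⁻¹) {m : ℕ}
    (hm : higherSerre x y t m = 0) : higherSerre x y t (m + 1) = 0 := by
  have hrec := mul_higherSerre x y ht m
  rw [hm, mul_zero, zero_mul, smul_zero, zero_sub, eq_comm, neg_eq_zero, smul_eq_zero] at hrec
  refine hrec.resolve_left (mul_ne_zero (zpow_ne_zero _ (ne_zero_of_eq_qq_or_inv ht)) ?_)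
  exact_mod_cast qint_natCast_ne_zero m.succ_ne_zero

end SerreElement

theorem stmt6 {A : Type*} [Ring A] [Algebra K A] (x y : A)
    (h : x ^ 2 * y - qint 2 • (x * y * x) + y * x ^ 2 = 0)
    (m : ℕ) (hm : 2 ≤ m) (e : ℤ) (he : e = 1 ∨ e = -1) :
    ∑ r ∈ Finset.range (m + 1),
      ((-1 : K) ^ r * qq ^ (e * (r : ℤ) * (2 - (m : ℤ)))) • (dp x r * y * dp x (m - r)) = 0 := by
  have ht : qq ^ e = qq ∨ qq ^ e = qq⁻¹ := by rcases he with rfl | rfl <;> simp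
  have hzero : higherSerre x y (qq ^ e) m = 0 := by
    induction m, hm using Nat.le_induction with
    | base => rw [higherSerre_two, h, smul_zero]
    | succ n _ ih => exact higherSerre_succ_eq_zero x y ht ih
  simpa only [higherSerre, ← zpow_mul, mul_assoc] using hzero
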